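/- arXiv:2209.13186 — 2 statements merged into one kernel-verified Lean document; each statement's English description precedes it below -/
import Mathlib

section
/- Let b be a prime, m, n positive integers with n ≥ m, and C_1,...,C_s ∈ F_b^{m×m} generating matrices of a digital net P such that each projection P_u is a digital (t_u, m, |u|)-net. For any nonzero k = (k_1,...,k_s) ∈ ℕ_0^s with k_j < b^m for all j, letting u = {j : k_j ≠ 0}, the probability that k lies in the dual net of the linearly scrambled net P(L_1 C_1, ..., L_s C_s), when L_1,...,L_s are drawn independently and uniformly from the set of m×m (or larger, with n rows) lower-triangular matrices over F_b with nonzero diagonals, is at most (b/(b-1))^{|u|-1} · b^{-m + t_u}. -/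
/-- The `i`-th base-`b` digit of `k`, viewed in `F_b`. -/
def digitVec (b k i : ℕ) : ZMod b := ((Nat.digits b k).getD i 0 : ZMod b)

/-- The NRT weight `μ₁(k)`. -/
def nrtWeight (b k : ℕ) : ℕ := (Nat.digits b k).length

/-- The dual net of the digital net over `F_b` with generating matrices
`C j ∈ F_b^{n×m}`. -/
def dualNet {b s m n : ℕ} (C : Fin s → Matrix (Fin n) (Fin m) (ZMod b)) :
    Set (Fin s → ℕ) :=
  {k | ∑ j, (C j).transpose.mulVec (fun i : Fin n => digitVec b (k j) i) = 0}

/-- An `n × m` matrix over `F_b` (with `m ≤ n`) is lower triangular with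
nonzero diagonal entries. -/
def IsLowTri {b n m : ℕ} (L : Matrix (Fin n) (Fin m) (ZMod b)) : Prop :=
  (∀ (i : Fin n) (j : Fin m), (i : ℕ) < (j : ℕ) → L i j = 0) ∧
  ∀ (i : Fin n) (j : Fin m), (i : ℕ) = (j : ℕ) → L i j ≠ 0

/-!
Let `v_j` be the digit vector of `k_j` and `c_j` its NRT weight. Then `k` is dual to the scrambled
net iff `∑ C_jᵀ (L_jᵀ v_j) = 0`. Because `L_j` is lower triangular with nonzero diagonal,
`L_jᵀ v_j` is uniformly distributed over the vectors of NRT weight exactly `c_j`, so the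
probability is `#Z / ∏_j #{y | y has weight c_j}`, where `Z` is the set of solutions `w` of
`∑ C_jᵀ w_j = 0` in which every `w_j` has weight exactly `c_j`.

By the `t`-value hypothesis every nonzero solution supported on `u` has total weight
`> r = m - t_u`. Split `c = d + (c - d)` with `∑ d = r` and `d_j < c_j` for some `j`; two elements
of `Z` agreeing on the `∑ c - r` digits in the window `d_j ≤ a < c_j` are equal, and one of those
digits is a nonzero leading digit. Hence `#Z ≤ (b - 1) b ^ (∑ c - r - 1)`.
-/

open Finset Matrix

def VanishesFrom {F : Type*} [Zero F] {m : ℕ} (x : Fin m → F) (c : ℕ) : Prop :=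
  ∀ a : Fin m, c ≤ (a : ℕ) → x a = 0

def HasNRTWeight {F : Type*} [Zero F] {m : ℕ} (x : Fin m → F) (c : ℕ) : Prop :=
  VanishesFrom x c ∧ ∀ a : Fin m, (a : ℕ) + 1 = c → x a ≠ 0

instance {F : Type*} [Zero F] [DecidableEq F] {m : ℕ} (x : Fin m → F) (c : ℕ) :
    Decidable (VanishesFrom x c) :=
  inferInstanceAs (Decidable (∀ a : Fin m, c ≤ (a : ℕ) → x a = 0))

instance {F : Type*} [Zero F] [DecidableEq F] {m : ℕ} (x : Fin m → F) (c : ℕ) :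
    Decidable (HasNRTWeight x c) :=
  inferInstanceAs (Decidable (VanishesFrom x c ∧ ∀ a : Fin m, (a : ℕ) + 1 = c → x a ≠ 0))

instance {b n m : ℕ} (L : Matrix (Fin n) (Fin m) (ZMod b)) : Decidable (IsLowTri L) :=
  decidable_of_iff ((∀ (i : Fin n) (j : Fin m), (i : ℕ) < (j : ℕ) → of.symm L i j = 0) ∧
    ∀ (i : Fin n) (j : Fin m), (i : ℕ) = (j : ℕ) → of.symm L i j ≠ 0) Iff.rfl

lemma hasNRTWeight_zero_iff {F : Type*} [Zero F] {m : ℕ} {x : Fin m → F} :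
    HasNRTWeight x 0 ↔ x = 0 := by
  simp [HasNRTWeight, VanishesFrom, funext_iff]

lemma ne_zero_of_hasNRTWeight {ι F : Type*} [Zero F] {m : ℕ} {c : ι → ℕ} (hcm : ∀ j, c j ≤ m)
    (hc : c ≠ 0) {w : ι → Fin m → F} (hw : ∀ j, HasNRTWeight (w j) (c j)) : w ≠ 0 := by
  obtain ⟨j, hj⟩ := Function.ne_iff.1 hc
  rw [Pi.zero_apply] at hj
  refine fun h => (hw j).2 ⟨c j - 1, by have := hcm j; omega⟩ (by simp only; omega) ?_
  simp [h]

section Digits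

variable {b : ℕ}

lemma nrtWeight_eq_zero_iff {k : ℕ} : nrtWeight b k = 0 ↔ k = 0 := by
  simp [nrtWeight, Nat.digits_eq_nil_iff_eq_zero]

lemma digitVec_eq_zero_of_nrtWeight_le {k i : ℕ} (h : nrtWeight b k ≤ i) : digitVec b k i = 0 := by
  rw [digitVec, List.getD_eq_default _ _ h, Nat.cast_zero]

lemma digitVec_nrtWeight_sub_one_ne_zero (hb : 1 < b) {k : ℕ} (hk : k ≠ 0) :
    digitVec b k (nrtWeight b k - 1) ≠ 0 := by
  have hne : Nat.digits b k ≠ [] := Nat.digits_ne_nil_iff_ne_zero.2 hk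
  have hlast : (Nat.digits b k).getD (nrtWeight b k - 1) 0 = (Nat.digits b k).getLast hne := by
    rw [List.getLast_eq_getElem, List.getD_eq_getElem]
    rfl
  rw [digitVec, hlast, Ne, ZMod.natCast_eq_zero_iff]
  exact Nat.not_dvd_of_pos_of_lt (Nat.pos_of_ne_zero (Nat.getLast_digit_ne_zero b hk))
    (Nat.digits_lt_base hb (List.getLast_mem hne))

lemma nrtWeight_le_of_digitVec_eq_zero (hb : 1 < b) {k d : ℕ}
    (h : ∀ i, d ≤ i → digitVec b k i = 0) : nrtWeight b k ≤ d := by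
  by_contra! hlt
  have hk : k ≠ 0 := by rintro rfl; simp [nrtWeight] at hlt
  exact digitVec_nrtWeight_sub_one_ne_zero hb hk (h _ (by omega))

lemma hasNRTWeight_digitVec (hb : 1 < b) (k n : ℕ) :
    HasNRTWeight (fun i : Fin n => digitVec b k i) (nrtWeight b k) := by
  refine ⟨fun i hi => digitVec_eq_zero_of_nrtWeight_le hi, fun i hi => ?_⟩
  have hk : k ≠ 0 := by rintro rfl; simp [nrtWeight] at hi
  simpa [← hi] using digitVec_nrtWeight_sub_one_ne_zero hb hk

def ofDigitVec {m : ℕ} (w : Fin m → ZMod b) : ℕ :=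
  Nat.ofDigits b (List.ofFn fun a => (w a).val)

lemma digitVec_ofDigitVec [NeZero b] (hb : 1 < b) {m : ℕ} (w : Fin m → ZMod b) (i : ℕ) :
    digitVec b (ofDigitVec w) i = if h : i < m then w ⟨i, h⟩ else 0 := by
  set l := List.ofFn fun a => (w a).val
  have hl : l.length = m ∧ ∀ x ∈ l, x < b := ⟨by simp [l], by simp [l, ZMod.val_lt]⟩
  have hinv : Nat.digitsAppend b m (Nat.ofDigits b l) = l :=
    (Nat.setInvOn_digitsAppend_ofDigits hb m).1 hl
  have hget : (Nat.digits b (Nat.ofDigits b l)).getD i 0 = l.getD i 0 := by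
    conv_rhs => rw [← hinv]
    rw [Nat.digitsAppend]
    rcases lt_or_ge i (Nat.digits b (Nat.ofDigits b l)).length with h | h
    · rw [List.getD_append _ _ _ _ h]
    · rw [List.getD_append_right _ _ _ _ h, List.getD_eq_default _ _ h]
      simp only [List.getD_eq_getElem?_getD, List.getElem?_replicate]
      split_ifs <;> rfl
  rw [digitVec, ofDigitVec, hget]
  split_ifs with h <;> simp [l, List.getD_eq_getElem?_getD, h]

lemma nrtWeight_ofDigitVec_le [NeZero b] (hb : 1 < b) {m d : ℕ} {w : Fin m → ZMod b}
    (hw : VanishesFrom w d) : nrtWeight b (ofDigitVec w) ≤ d := by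
  refine nrtWeight_le_of_digitVec_eq_zero hb fun i hi => ?_
  rw [digitVec_ofDigitVec hb]
  split_ifs with h
  · exact hw ⟨i, h⟩ hi
  · rfl

end Digits

lemma lt_sum_of_mulVec_sum_eq_zero {b s m r : ℕ} [NeZero b] (hb : 1 < b)
    {C : Fin s → Matrix (Fin m) (Fin m) (ZMod b)} {u : Finset (Fin s)}
    (hnet : ∀ k' : Fin s → ℕ, k' ∈ dualNet C → k' ≠ 0 → (∀ j, j ∉ u → k' j = 0) →
      r + 1 ≤ ∑ j, nrtWeight b (k' j))
    {w : Fin s → Fin m → ZMod b} (hw : ∑ j, (C j)ᵀ *ᵥ w j = 0) (hw0 : w ≠ 0)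
    {d : Fin s → ℕ} (hdu : ∀ j ∉ u, d j = 0) (hwd : ∀ j, VanishesFrom (w j) (d j)) :
    r < ∑ j, d j := by
  set k' : Fin s → ℕ := fun j => ofDigitVec (w j)
  have hdigits : ∀ j, (fun i : Fin m => digitVec b (k' j) i) = w j := fun j =>
    funext fun i => by simp [k', digitVec_ofDigitVec hb]
  have hweight : ∀ j, nrtWeight b (k' j) ≤ d j := fun j => nrtWeight_ofDigitVec_le hb (hwd j)
  have hdual : k' ∈ dualNet C := by
    simpa only [dualNet, Set.mem_ofPred_eq, hdigits] using hw
  have hk'0 : k' ≠ 0 := by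
    refine fun h => hw0 (funext fun j => ?_)
    rw [← hdigits j, show k' j = 0 from congrFun h j]
    funext i
    simp [digitVec]
  have hk'u : ∀ j, j ∉ u → k' j = 0 := fun j hj =>
    nrtWeight_eq_zero_iff.1 (Nat.le_zero.1 (hdu j hj ▸ hweight j))
  exact (hnet k' hdual hk'0 hk'u).trans (sum_le_sum fun j _ => hweight j)

section LowerTriangular

variable {R : Type*} [Semiring R] {n m c : ℕ} {L : Matrix (Fin n) (Fin m) R} {v : Fin n → R}

lemma vanishesFrom_transpose_mulVec (hL : ∀ (i : Fin n) (a : Fin m), (i : ℕ) < a → L i a = 0)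
    (hv : VanishesFrom v c) : VanishesFrom (Lᵀ *ᵥ v) c := by
  intro a ha
  simp only [mulVec, dotProduct, transpose_apply]
  refine sum_eq_zero fun i _ => ?_
  rcases lt_or_ge (i : ℕ) a with hi | hi
  · simp [hL i a hi]
  · simp [hv i (ha.trans hi)]

lemma transpose_mulVec_apply_of_vanishesFrom
    (hL : ∀ (i : Fin n) (a : Fin m), (i : ℕ) < a → L i a = 0) (hv : VanishesFrom v c)
    {a : Fin m} {i : Fin n} (hia : (i : ℕ) = a) (ha : (a : ℕ) + 1 = c) :
    (Lᵀ *ᵥ v) a = L i a * v i := by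
  simp only [mulVec, dotProduct, transpose_apply]
  refine sum_eq_single i (fun i' _ hi' => ?_) (by simp)
  rcases lt_or_gt_of_ne (Fin.val_ne_of_ne hi') with h | h
  · simp [hL i' a (by omega)]
  · simp [hv i' (by omega)]

end LowerTriangular

section Scrambling

variable {b n m c : ℕ} [Fact b.Prime] {v : Fin n → ZMod b}

lemma IsLowTri.hasNRTWeight_transpose_mulVec {L : Matrix (Fin n) (Fin m) (ZMod b)}
    (hL : IsLowTri L) (hcn : c ≤ n) (hv : HasNRTWeight v c) : HasNRTWeight (Lᵀ *ᵥ v) c := by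
  refine ⟨vanishesFrom_transpose_mulVec hL.1 hv.1, fun a ha => ?_⟩
  rw [transpose_mulVec_apply_of_vanishesFrom (i := ⟨a, by omega⟩) hL.1 hv.1 rfl ha]
  exact mul_ne_zero (hL.2 _ _ rfl) (hv.2 _ ha)

/-- Adding `e_{c-1} ⊗ (x' - x) / v_{c-1}` is an injection from the fibre over `x` to the one
over `x'`. -/
lemma card_lowTri_fiber_le (hcn : c ≤ n) (hv : HasNRTWeight v c) {x x' : Fin m → ZMod b}
    (hx : HasNRTWeight x c) (hx' : HasNRTWeight x' c) :
    #{L : Matrix (Fin n) (Fin m) (ZMod b) | IsLowTri L ∧ Lᵀ *ᵥ v = x} ≤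
      #{L : Matrix (Fin n) (Fin m) (ZMod b) | IsLowTri L ∧ Lᵀ *ᵥ v = x'} := by
  obtain _ | c := c
  · rw [hasNRTWeight_zero_iff.1 hx, hasNRTWeight_zero_iff.1 hx']
  set i₀ : Fin n := ⟨c, by omega⟩
  set D : Matrix (Fin n) (Fin m) (ZMod b) := vecMulVec (Pi.single i₀ (v i₀)⁻¹) (x' - x)
  have hD : ∀ i a, D i a = if i = i₀ then (v i₀)⁻¹ * (x' a - x a) else 0 := fun i a => by
    by_cases h : i = i₀ <;> simp [D, vecMulVec_apply, h]
  refine card_le_card_of_injOn (· + D) (fun L hL => ?_) (add_left_injective D).injOn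
  simp only [coe_filter, Set.mem_ofPred_eq, mem_univ, true_and] at hL ⊢
  obtain ⟨⟨hLtri, hLdiag⟩, hLx⟩ := hL
  have hupper : ∀ (i : Fin n) (a : Fin m), (i : ℕ) < a → (L + D) i a = 0 := fun i a hia => by
    by_cases h : i = i₀
    · have ha : c + 1 ≤ (a : ℕ) := by simp [h, i₀] at hia; omega
      rw [Matrix.add_apply, hLtri i a hia, hD, if_pos h, hx.1 a ha, hx'.1 a ha]
      simp
    · simp [hD, h, hLtri i a hia]
  have hmul : (L + D)ᵀ *ᵥ v = x' := by
    have hv₀ : v i₀ ≠ 0 := hv.2 i₀ rfl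
    rw [transpose_add, add_mulVec, hLx, transpose_vecMulVec, vecMulVec_mulVec, single_dotProduct,
      inv_mul_cancel₀ hv₀]
    simp
  refine ⟨⟨hupper, fun i a hia => ?_⟩, hmul⟩
  by_cases h : i = i₀
  · have hval := transpose_mulVec_apply_of_vanishesFrom hupper hv.1 hia (by simp [← hia, h, i₀])
    rw [hmul] at hval
    exact left_ne_zero_of_mul (hval ▸ hx'.2 a (by simp [← hia, h, i₀]))
  · simpa [hD, h] using hLdiag i a hia

/-- The scrambled digit vector `Lᵀ v` is uniformly distributed over the vectors of the same
NRT weight. -/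
lemma card_lowTri_fiber_mul_card_hasNRTWeight (hcn : c ≤ n) (hv : HasNRTWeight v c)
    (x : Fin m → ZMod b) :
    #{L : Matrix (Fin n) (Fin m) (ZMod b) | IsLowTri L ∧ Lᵀ *ᵥ v = x} *
        #{y : Fin m → ZMod b | HasNRTWeight y c} =
      if HasNRTWeight x c then #{L : Matrix (Fin n) (Fin m) (ZMod b) | IsLowTri L} else 0 := by
  split_ifs with hx
  · rw [card_eq_sum_card_fiberwise (s := {L | IsLowTri L}) (f := fun L => Lᵀ *ᵥ v)
      (t := {y | HasNRTWeight y c})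
      fun L hL => by simpa using (mem_filter.1 hL).2.hasNRTWeight_transpose_mulVec hcn hv]
    simp only [filter_filter]
    rw [sum_congr rfl fun y hy => le_antisymm (card_lowTri_fiber_le hcn hv (mem_filter.1 hy).2 hx)
      (card_lowTri_fiber_le hcn hv hx (mem_filter.1 hy).2), sum_const, smul_eq_mul, mul_comm]
  · refine mul_eq_zero_of_left (card_eq_zero.2 (filter_eq_empty_iff.2 ?_)) _
    rintro L - ⟨hL, rfl⟩
    exact hx (hL.hasNRTWeight_transpose_mulVec hcn hv)

lemma card_isLowTri_pos : 0 < #{L : Matrix (Fin n) (Fin m) (ZMod b) | IsLowTri L} := by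
  refine card_pos.2 ⟨of fun i a => if (i : ℕ) = a then 1 else 0, mem_filter.2 ⟨mem_univ _, ?_, ?_⟩⟩
  · intro i a hia
    simp [hia.ne]
  · intro i a hia
    simp [hia]

end Scrambling

section Weights

variable {F : Type*} [Zero F] [Fintype F] [DecidableEq F] {m : ℕ}

lemma card_vanishesFrom {c : ℕ} (hcm : c ≤ m) :
    #{y : Fin m → F | VanishesFrom y c} = Fintype.card F ^ c := by
  have hpi : ({y : Fin m → F | VanishesFrom y c} : Finset (Fin m → F)) =
      Fintype.piFinset fun a : Fin m => if (a : ℕ) < c then univ else {0} := by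
    ext y
    rw [mem_filter, Fintype.mem_piFinset]
    simp only [mem_univ, true_and, VanishesFrom]
    refine forall_congr' fun a => ?_
    split_ifs with h
    · simp [h]
    · simp [not_lt.1 h]
  rw [hpi, Fintype.card_piFinset]
  simp only [apply_ite card, card_univ, card_singleton]
  rw [prod_ite, prod_const, prod_const_one, mul_one, Fin.card_filter_val_lt, min_eq_right hcm]

lemma card_hasNRTWeight_mul {c : ℕ} (hc : 0 < c) (hcm : c ≤ m) :
    #{y : Fin m → F | HasNRTWeight y c} * Fintype.card F =
      (Fintype.card F - 1) * Fintype.card F ^ c := by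
  obtain _ | c := c
  · omega
  have hsdiff : ({y : Fin m → F | HasNRTWeight y (c + 1)} : Finset (Fin m → F)) =
      ({y | VanishesFrom y (c + 1)} : Finset (Fin m → F)) \
        ({y | VanishesFrom y c} : Finset (Fin m → F)) := by
    ext y
    rw [mem_sdiff, mem_filter, mem_filter, mem_filter]
    simp only [mem_univ, true_and, HasNRTWeight]
    refine and_congr_right fun hy => ⟨fun h hc => h ⟨c, by omega⟩ rfl (hc _ le_rfl), ?_⟩
    intro h a ha hya
    refine h fun a' ha' => ?_
    rcases eq_or_lt_of_le ha' with h' | h'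
    · rwa [show a' = a from Fin.ext (by omega)]
    · exact hy a' h'
  have hsub : ({y : Fin m → F | VanishesFrom y c} : Finset (Fin m → F)) ⊆
      ({y | VanishesFrom y (c + 1)} : Finset (Fin m → F)) :=
    monotone_filter_right _ fun y _ hy a ha => hy a (by omega)
  rw [hsdiff, card_sdiff_of_subset hsub, card_vanishesFrom hcm, card_vanishesFrom (by omega),
    pow_succ, ← Nat.mul_sub_one]
  ring

lemma prod_card_hasNRTWeight_mul_pow {ι : Type*} [Fintype ι] {c : ι → ℕ} (hcm : ∀ j, c j ≤ m)
    {u : Finset ι} (hu : ∀ j, j ∈ u ↔ c j ≠ 0) :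
    (∏ j, #{y : Fin m → F | HasNRTWeight y (c j)}) * Fintype.card F ^ #u =
      (Fintype.card F - 1) ^ #u * Fintype.card F ^ ∑ j, c j := by
  have hcu : ∀ j ∉ u, c j = 0 := fun j hj => not_ne_iff.1 ((hu j).not.1 hj)
  have hout : ∀ j ∉ u, #{y : Fin m → F | HasNRTWeight y (c j)} = 1 := fun j hj => by
    simp [hcu j hj, hasNRTWeight_zero_iff, filter_eq']
  calc (∏ j, #{y : Fin m → F | HasNRTWeight y (c j)}) * Fintype.card F ^ #u
      = ∏ j ∈ u, (#{y : Fin m → F | HasNRTWeight y (c j)} * Fintype.card F) := by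
        rw [prod_mul_distrib, prod_const, prod_subset (subset_univ u) fun j _ hj => hout j hj]
    _ = ∏ j ∈ u, ((Fintype.card F - 1) * Fintype.card F ^ c j) :=
        prod_congr rfl fun j hj => card_hasNRTWeight_mul (Nat.pos_of_ne_zero ((hu j).1 hj)) (hcm j)
    _ = (Fintype.card F - 1) ^ #u * Fintype.card F ^ ∑ j, c j := by
        rw [prod_mul_distrib, prod_const, prod_pow_eq_pow_sum,
          sum_subset (subset_univ u) fun j _ hj => hcu j hj]

end Weights

lemma ncard_forall_and_eq_sum_prod {ι α β : Type*} [Fintype ι] [DecidableEq ι] [Fintype α]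
    [Fintype β] [DecidableEq β] (P : α → Prop) [DecidablePred P] (f : ι → α → β)
    (Q : (ι → β) → Prop) [DecidablePred Q] :
    {L : ι → α | (∀ j, P (L j)) ∧ Q fun j => f j (L j)}.ncard =
      ∑ w with Q w, ∏ j, #{a | P a ∧ f j a = w j} := by
  have hset : {L : ι → α | (∀ j, P (L j)) ∧ Q fun j => f j (L j)} =
      ↑({L | (∀ j, P (L j)) ∧ Q fun j => f j (L j)} : Finset (ι → α)) := by
    ext L
    simp
  rw [hset, Set.ncard_coe_finset, card_eq_sum_card_fiberwise (f := fun L j => f j (L j))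
    (t := {w | Q w}) fun L hL => by simpa using (mem_filter.1 hL).2.2]
  refine sum_congr rfl fun w hw => ?_
  rw [← Fintype.card_piFinset, filter_filter]
  congr 1
  ext L
  simp only [mem_filter, mem_univ, true_and, Fintype.mem_piFinset] at hw ⊢
  refine ⟨fun ⟨⟨hP, _⟩, hf⟩ j => ⟨hP j, congrFun hf j⟩, fun h => ?_⟩
  have hf : (fun j => f j (L j)) = w := funext fun j => (h j).2
  exact ⟨⟨fun j => (h j).1, hf ▸ hw⟩, hf⟩

section Counting

variable {ι F : Type*} [Fintype ι] [AddCommGroup F] {m : ℕ}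

lemma exists_le_sum_eq [DecidableEq ι] {c : ι → ℕ} :
    ∀ {r : ℕ}, r ≤ ∑ j, c j → ∃ d ≤ c, ∑ j, d j = r
  | 0, _ => ⟨0, (fun _ => Nat.zero_le _), by simp⟩
  | r + 1, hr => by
    obtain ⟨d, hdc, hd⟩ := exists_le_sum_eq (c := c) (r := r) (by omega)
    obtain ⟨j, -, hj⟩ := exists_lt_of_sum_lt (hd ▸ hr : ∑ j, d j < ∑ j, c j)
    refine ⟨d + Pi.single j 1, fun i => ?_, by simp [sum_add_distrib, hd]⟩
    by_cases h : i = j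
    · subst h
      simpa using hj
    · simpa [h] using hdc i

def window (m : ℕ) (d c : ι → ℕ) : Finset (ι × Fin m) := {p | d p.1 ≤ p.2 ∧ (p.2 : ℕ) < c p.1}

lemma card_window_le (d c : ι → ℕ) : #(window m d c) ≤ ∑ j, (c j - d j) := by
  rw [window, card_filter, Fintype.sum_prod_type]
  refine sum_le_sum fun j _ => ?_
  rw [← card_filter]
  calc #{a : Fin m | d j ≤ a ∧ (a : ℕ) < c j} ≤ #(Ico (d j) (c j)) :=
        card_le_card_of_injOn Fin.val (fun a ha => by simpa using ha) Fin.val_injective.injOn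
    _ = c j - d j := Nat.card_Ico _ _

lemma eq_of_eqOn_window {G : AddSubgroup (ι → Fin m → F)} {c d : ι → ℕ} {r : ℕ}
    (hG : ∀ w ∈ G, w ≠ 0 → ∀ d ≤ c, (∀ j, VanishesFrom (w j) (d j)) → r < ∑ j, d j)
    (hdc : d ≤ c) (hd : ∑ j, d j = r) {w w' : ι → Fin m → F} (hw : w ∈ G) (hw' : w' ∈ G)
    (hwc : ∀ j, VanishesFrom (w j) (c j)) (hw'c : ∀ j, VanishesFrom (w' j) (c j))
    (heq : ∀ p ∈ window m d c, w p.1 p.2 = w' p.1 p.2) : w = w' := by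
  by_contra hne
  refine (hG (w - w') (G.sub_mem hw hw') (sub_ne_zero.2 hne) d hdc fun j a ha => ?_).ne hd.symm
  rcases lt_or_ge (a : ℕ) (c j) with hac | hac
  · simp [heq (j, a) (by simp [window, ha, hac])]
  · simp [hwc j a hac, hw'c j a hac]

lemma card_le_mul_pow_card_window [DecidableEq ι] [Fintype F] [DecidableEq F]
    {G : AddSubgroup (ι → Fin m → F)} {c d : ι → ℕ} {r : ℕ}
    (hG : ∀ w ∈ G, w ≠ 0 → ∀ d ≤ c, (∀ j, VanishesFrom (w j) (d j)) → r < ∑ j, d j)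
    (hdc : d ≤ c) (hd : ∑ j, d j = r) {p₀ : ι × Fin m} (hp₀ : p₀ ∈ window m d c)
    {Z : Finset (ι → Fin m → F)} (hZG : ∀ w ∈ Z, w ∈ G)
    (hZc : ∀ w ∈ Z, ∀ j, VanishesFrom (w j) (c j)) (hZp₀ : ∀ w ∈ Z, w p₀.1 p₀.2 ≠ 0) :
    #Z ≤ (Fintype.card F - 1) * Fintype.card F ^ (#(window m d c) - 1) := by
  set S := (window m d c).erase p₀
  calc #Z ≤ #(({x : F | x ≠ 0} : Finset F) ×ˢ (univ : Finset (S → F))) := by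
        refine card_le_card_of_injOn (fun w => (w p₀.1 p₀.2, fun p : S => w p.1.1 p.1.2))
          (fun w hw => by simpa using hZp₀ w hw) fun w hw w' hw' hππ => ?_
        obtain ⟨h₀, hS⟩ := Prod.ext_iff.1 hππ
        refine eq_of_eqOn_window hG hdc hd (hZG w hw) (hZG w' hw') (hZc w hw) (hZc w' hw')
          fun p hp => ?_
        by_cases hpp₀ : p = p₀
        · exact hpp₀ ▸ h₀
        · exact congrFun hS ⟨p, mem_erase.2 ⟨hpp₀, hp⟩⟩
    _ = (Fintype.card F - 1) * Fintype.card F ^ (#(window m d c) - 1) := by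
        rw [card_product, card_univ, Fintype.card_fun, Fintype.card_coe, card_erase_of_mem hp₀]
        simp [filter_ne']

theorem card_mul_pow_le_of_hasNRTWeight [DecidableEq ι] [Fintype F] [DecidableEq F]
    (G : AddSubgroup (ι → Fin m → F)) {c : ι → ℕ} {r : ℕ} (hcm : ∀ j, c j ≤ m) (hc : c ≠ 0)
    (hG : ∀ w ∈ G, w ≠ 0 → ∀ d ≤ c, (∀ j, VanishesFrom (w j) (d j)) → r < ∑ j, d j)
    {Z : Finset (ι → Fin m → F)} (hZG : ∀ w ∈ Z, w ∈ G)
    (hZc : ∀ w ∈ Z, ∀ j, HasNRTWeight (w j) (c j)) :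
    #Z * Fintype.card F ^ (r + 1) ≤ (Fintype.card F - 1) * Fintype.card F ^ ∑ j, c j := by
  set q := Fintype.card F
  rcases Z.eq_empty_or_nonempty with rfl | ⟨w₀, hw₀⟩
  · simp
  have hrc : r < ∑ j, c j := hG w₀ (hZG w₀ hw₀) (ne_zero_of_hasNRTWeight hcm hc (hZc w₀ hw₀)) c
    le_rfl fun j => (hZc w₀ hw₀ j).1
  obtain ⟨d, hdc, hd⟩ := exists_le_sum_eq hrc.le
  obtain ⟨j₁, -, hj₁⟩ := exists_lt_of_sum_lt (hd ▸ hrc)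
  set p₁ : ι × Fin m := (j₁, ⟨c j₁ - 1, by have := hcm j₁; omega⟩)
  have hp₁ : p₁ ∈ window m d c := by
    simp only [window, mem_filter, mem_univ, true_and, p₁]
    omega
  have hZ := card_le_mul_pow_card_window hG hdc hd hp₁ hZG (fun w hw j => (hZc w hw j).1)
    fun w hw => (hZc w hw j₁).2 p₁.2 (by simp only [p₁]; omega)
  have hwindow : #(window m d c) - 1 + r + 1 ≤ ∑ j, c j := by
    have hsum : ∑ j, (c j - d j) + ∑ j, d j = ∑ j, c j := by
      rw [← sum_add_distrib]
      exact sum_congr rfl fun j _ => Nat.sub_add_cancel (hdc j)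
    have := card_window_le (m := m) d c
    have := card_pos.2 ⟨_, hp₁⟩
    omega
  calc #Z * q ^ (r + 1) ≤ (q - 1) * q ^ (#(window m d c) - 1) * q ^ (r + 1) :=
        Nat.mul_le_mul_right _ hZ
    _ = (q - 1) * q ^ (#(window m d c) - 1 + r + 1) := by ring
    _ ≤ (q - 1) * q ^ ∑ j, c j :=
        Nat.mul_le_mul_left _ (Nat.pow_le_pow_right Fintype.card_pos hwindow)

end Counting

lemma div_le_of_mul_eq_of_mul_pow_le {q N T z e : ℝ} {p t m A : ℕ} (hq : 1 < q) (hp : p ≠ 0)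
    (htm : t ≤ m) (hT : 0 < T) (hN : N * e = z * T) (hz : z * q ^ (m - t + 1) ≤ (q - 1) * q ^ A)
    (he : e * q ^ p = (q - 1) ^ p * q ^ A) :
    N / T ≤ (q / (q - 1)) ^ (p - 1) * q ^ t / q ^ m := by
  obtain ⟨p, rfl⟩ := Nat.exists_eq_succ_of_ne_zero hp
  have hq1 : 0 < q - 1 := by linarith
  have he' : e = (q - 1) ^ (p + 1) * q ^ A / q ^ (p + 1) := by
    rw [← he]
    field_simp
  have hNz : N / T = z / e := by
    rw [div_eq_div_iff hT.ne' (by rw [he']; positivity)]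
    linarith
  have hbound : (q / (q - 1)) ^ p * e = (q - 1) * q ^ A / q := by
    rw [he', div_pow]
    field_simp
    ring
  have hpow : (q / (q - 1)) ^ p * q ^ t / q ^ m = (q / (q - 1)) ^ p / q ^ (m - t) := by
    rw [pow_sub₀ _ (by positivity) htm]
    field_simp
  rw [hNz, Nat.succ_sub_one, hpow, div_le_div_iff₀ (by rw [he']; positivity) (by positivity),
    hbound, le_div_iff₀ (by positivity), mul_assoc, ← pow_succ]
  exact hz

section DualNet

variable {b s m n : ℕ}

lemma mem_dualNet_mul_iff {p : ℕ} {L : Fin s → Matrix (Fin n) (Fin m) (ZMod b)}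
    {C : Fin s → Matrix (Fin m) (Fin p) (ZMod b)} {k : Fin s → ℕ} :
    k ∈ dualNet (fun j => L j * C j) ↔
      ∑ j, (C j)ᵀ *ᵥ ((L j)ᵀ *ᵥ fun i => digitVec b (k j) i) = 0 := by
  simp only [dualNet, Set.mem_ofPred_eq, transpose_mul, mulVec_mulVec]

lemma ncard_forall_isLowTri [NeZero b] :
    {L : Fin s → Matrix (Fin n) (Fin m) (ZMod b) | ∀ j, IsLowTri (L j)}.ncard =
      #{M : Matrix (Fin n) (Fin m) (ZMod b) | IsLowTri M} ^ s := by
  have hset : {L : Fin s → Matrix (Fin n) (Fin m) (ZMod b) | ∀ j, IsLowTri (L j)} =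
      ↑(Fintype.piFinset fun _ => ({M | IsLowTri M} : Finset (Matrix (Fin n) (Fin m) (ZMod b))) :
        Finset (Fin s → Matrix (Fin n) (Fin m) (ZMod b))) := by
    ext L
    simp
  rw [hset, Set.ncard_coe_finset, Fintype.card_piFinset, prod_const, card_univ, Fintype.card_fin]

lemma ncard_isLowTri_mem_dualNet_mul_prod [Fact b.Prime] {p : ℕ}
    {C : Fin s → Matrix (Fin m) (Fin p) (ZMod b)} {k : Fin s → ℕ}
    (hkn : ∀ j, nrtWeight b (k j) ≤ n) :
    {L : Fin s → Matrix (Fin n) (Fin m) (ZMod b) |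
        (∀ j, IsLowTri (L j)) ∧ k ∈ dualNet (fun j => L j * C j)}.ncard *
        ∏ j, #{y : Fin m → ZMod b | HasNRTWeight y (nrtWeight b (k j))} =
      #{w : Fin s → Fin m → ZMod b |
          ∑ j, (C j)ᵀ *ᵥ w j = 0 ∧ ∀ j, HasNRTWeight (w j) (nrtWeight b (k j))} *
        #{M : Matrix (Fin n) (Fin m) (ZMod b) | IsLowTri M} ^ s := by
  have hb1 : 1 < b := (Fact.out : b.Prime).one_lt
  simp_rw [mem_dualNet_mul_iff]
  rw [ncard_forall_and_eq_sum_prod IsLowTri (fun j M => Mᵀ *ᵥ fun i => digitVec b (k j) i)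
    (fun w => ∑ j, (C j)ᵀ *ᵥ w j = 0), sum_mul]
  have hfib : ∀ w : Fin s → Fin m → ZMod b,
      (∏ j, #{M : Matrix (Fin n) (Fin m) (ZMod b) |
          IsLowTri M ∧ (Mᵀ *ᵥ fun i => digitVec b (k j) i) = w j}) *
        ∏ j, #{y : Fin m → ZMod b | HasNRTWeight y (nrtWeight b (k j))} =
      if ∀ j, HasNRTWeight (w j) (nrtWeight b (k j))
        then #{M : Matrix (Fin n) (Fin m) (ZMod b) | IsLowTri M} ^ s else 0 := fun w => by
    rw [← prod_mul_distrib]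
    simp_rw [card_lowTri_fiber_mul_card_hasNRTWeight (hkn _) (hasNRTWeight_digitVec hb1 _ n),
      prod_ite_zero, prod_const, card_univ, Fintype.card_fin, mem_univ, true_implies]
  rw [sum_congr rfl fun w _ => hfib w, ← sum_filter, sum_const, filter_filter, smul_eq_mul]

lemma card_dualNet_hasNRTWeight_mul_pow_le [Fact b.Prime]
    {C : Fin s → Matrix (Fin m) (Fin m) (ZMod b)} {u : Finset (Fin s)} {r : ℕ}
    (hnet : ∀ k' : Fin s → ℕ, k' ∈ dualNet C → k' ≠ 0 → (∀ j, j ∉ u → k' j = 0) →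
      r + 1 ≤ ∑ j, nrtWeight b (k' j))
    {c : Fin s → ℕ} (hcm : ∀ j, c j ≤ m) (huc : ∀ j, j ∈ u ↔ c j ≠ 0) (hc : c ≠ 0) :
    #{w : Fin s → Fin m → ZMod b | ∑ j, (C j)ᵀ *ᵥ w j = 0 ∧ ∀ j, HasNRTWeight (w j) (c j)} *
      b ^ (r + 1) ≤ (b - 1) * b ^ ∑ j, c j := by
  set G : AddSubgroup (Fin s → Fin m → ZMod b) :=
    (LinearMap.ker (∑ j, (C j)ᵀ.mulVecLin ∘ₗ LinearMap.proj j)).toAddSubgroup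
  have hmemG : ∀ w, w ∈ G ↔ ∑ j, (C j)ᵀ *ᵥ w j = 0 := fun w => by
    simp only [G, Submodule.mem_toAddSubgroup, LinearMap.mem_ker, LinearMap.coe_sum,
      Finset.sum_apply, LinearMap.comp_apply, mulVecLin_apply, LinearMap.proj_apply]
  have hG : ∀ w ∈ G, w ≠ 0 → ∀ d ≤ c, (∀ j, VanishesFrom (w j) (d j)) → r < ∑ j, d j :=
    fun w hw hw0 d hdc hwd =>
      lt_sum_of_mulVec_sum_eq_zero (Fact.out : b.Prime).one_lt hnet ((hmemG w).1 hw) hw0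
        (fun j hj => Nat.le_zero.1 (not_ne_iff.1 ((huc j).not.1 hj) ▸ hdc j)) hwd
  simpa [ZMod.card] using card_mul_pow_le_of_hasNRTWeight G hcm hc hG
    (fun w hw => (hmemG w).2 (mem_filter.1 hw).2.1) (fun w hw => (mem_filter.1 hw).2.2)

end DualNet

/-- `hnet` encodes, via the dual-net characterization of the `t`-value, that the projection
of the unscrambled net onto `u = supp(k)` is a digital `(t_u, m, |u|)`-net. -/
theorem stmt_11_general (b s m n : ℕ) (hb : b.Prime) (hmn : m ≤ n)
    (C : Fin s → Matrix (Fin m) (Fin m) (ZMod b))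
    (k : Fin s → ℕ) (hk : k ≠ 0) (hkm : ∀ j, k j < b ^ m)
    (u : Finset (Fin s)) (hu : ∀ j, j ∈ u ↔ k j ≠ 0)
    (tu : ℕ) (htu : tu ≤ m)
    (hnet : ∀ k' : Fin s → ℕ,
      k' ∈ dualNet C →
      k' ≠ 0 → (∀ j, j ∉ u → k' j = 0) → m - tu + 1 ≤ ∑ j, nrtWeight b (k' j)) :
    ({L : Fin s → Matrix (Fin n) (Fin m) (ZMod b) |
        (∀ j, IsLowTri (L j)) ∧ k ∈ dualNet (fun j => L j * C j)}.ncard : ℝ) /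
      ({L : Fin s → Matrix (Fin n) (Fin m) (ZMod b) |
        ∀ j, IsLowTri (L j)}.ncard : ℝ)
      ≤ ((b : ℝ) / ((b : ℝ) - 1)) ^ (u.card - 1) * (b : ℝ) ^ tu / (b : ℝ) ^ m := by
  have : Fact b.Prime := ⟨hb⟩
  have hb1 := hb.one_lt
  set c : Fin s → ℕ := fun j => nrtWeight b (k j)
  have hcm : ∀ j, c j ≤ m := fun j => (Nat.digits_length_le_iff hb1 _).2 (hkm j)
  have huc : ∀ j, j ∈ u ↔ c j ≠ 0 := fun j => (hu j).trans nrtWeight_eq_zero_iff.not.symm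
  obtain ⟨j₀, hj₀⟩ : u.Nonempty := by
    obtain ⟨j, hj⟩ := Function.ne_iff.1 hk
    exact ⟨j, (hu j).2 hj⟩
  have hZ := card_dualNet_hasNRTWeight_mul_pow_le (b := b) hnet hcm huc
    fun h => (huc j₀).1 hj₀ (congrFun h j₀)
  have hE := prod_card_hasNRTWeight_mul_pow (F := ZMod b) hcm huc
  rw [ZMod.card] at hE
  have hZℝ := (Nat.cast_le (α := ℝ)).2 hZ
  have hEℝ := congrArg (Nat.cast (R := ℝ)) hE
  push_cast [Nat.cast_sub hb1.le] at hZℝ hEℝ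
  rw [ncard_forall_isLowTri]
  exact div_le_of_mul_eq_of_mul_pow_le (by exact_mod_cast hb1) (card_pos.2 ⟨j₀, hj₀⟩).ne' htu
    (by exact_mod_cast pow_pos card_isLowTri_pos s)
    (by exact_mod_cast ncard_isLowTri_mem_dualNet_mul_prod (C := C) fun j => (hcm j).trans hmn)
    hZℝ hEℝ

/-- Probability that a fixed nonzero `k` with all components `< b^m` lies in the
dual net of a randomly linearly scrambled digital net. The hypothesis `hnet`
encodes (via the dual-net characterization of the `t`-value) that the projection
of the unscrambled net onto `u = supp(k)` is a digital `(t_u, m, |u|)`-net. -/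
theorem stmt_11 (b s m n : ℕ) (hb : b.Prime) (hm : 0 < m) (hmn : m ≤ n)
    (C : Fin s → Matrix (Fin m) (Fin m) (ZMod b))
    (k : Fin s → ℕ) (hk : k ≠ 0) (hkm : ∀ j, k j < b ^ m)
    (u : Finset (Fin s)) (hu : ∀ j, j ∈ u ↔ k j ≠ 0)
    (tu : ℕ) (htu : tu ≤ m)
    (hnet : ∀ k' : Fin s → ℕ,
      k' ∈ dualNet C →
      k' ≠ 0 → (∀ j, j ∉ u → k' j = 0) → m - tu + 1 ≤ ∑ j, nrtWeight b (k' j)) :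
    ({L : Fin s → Matrix (Fin n) (Fin m) (ZMod b) |
        (∀ j, IsLowTri (L j)) ∧ k ∈ dualNet (fun j => L j * C j)}.ncard : ℝ) /
      ({L : Fin s → Matrix (Fin n) (Fin m) (ZMod b) |
        ∀ j, IsLowTri (L j)}.ncard : ℝ)
      ≤ ((b : ℝ) / ((b : ℝ) - 1)) ^ (u.card - 1) * (b : ℝ) ^ tu / (b : ℝ) ^ m :=
  stmt_11_general b s m n hb hmn C k hk hkm u hu tu htu hnet
end

section
/- Let b be a prime, s a positive integer, and a = (a_1,...,a_s) with a_j ≥ 0 for all j. For i ∈ ℕ define vol_a(i) as the number of nonzero k ∈ ℕ_0^s with i ≤ μ_{∞,a}(k) < i+1, where μ_{∞,a}(k) = ∑_j μ_{∞,a_j}(k_j) and μ_{∞,a_j}(k_j) = μ_∞(k_j) + a_j v_j with v_j the number of nonzero base-b digits of k_j. Then for any x ∈ (0,1), vol_a(i) ≤ x^{−(i+1)} ∏_{j=1}^s ∏_{ℓ=1}^∞ (1 + (b−1) x^{ℓ + a_j}), and consequently log vol_a(i) ≤ −(i+1) log x − ((b−1)/log x) ∑_{j=1}^s x^{a_j}.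 In the unweighted case a_1 = ... = a_s = a ≥ 0, choosing x = exp(−√(s(b−1)/(i+1))) yields vol_a(i) ≤ exp(2√(s(b−1)(i+1))). -/
/-- The infinite Dick weight `μ_∞(k)`: the sum of the positions (counting
from 1) of all nonzero base-`b` digits of `k`. -/
def infDickWeight (b k : ℕ) : ℕ :=
  ((((List.range (Nat.digits b k).length).filter
      (fun i => (Nat.digits b k).getD i 0 ≠ 0))).map (· + 1)).sum

/-- The number of nonzero base-`b` digits of `k`. -/
def numNZDigits (b k : ℕ) : ℕ := ((Nat.digits b k).filter (· ≠ 0)).length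

/-- The modified infinite Dick weight `μ_{∞,a}(k) = ∑_j (μ_∞(k_j) + a_j v_j)`
where `v_j` is the number of nonzero base-`b` digits of `k_j`. -/
noncomputable def muInfA {s : ℕ} (b : ℕ) (a : Fin s → ℝ) (k : Fin s → ℕ) : ℝ :=
  ∑ j, ((infDickWeight b (k j) : ℝ) + a j * (numNZDigits b (k j) : ℝ))

/-- `vol_a(i)`: the number of nonzero `k ∈ ℕ₀^s` with `i ≤ μ_{∞,a}(k) < i + 1`. -/
noncomputable def volA {s : ℕ} (b : ℕ) (a : Fin s → ℝ) (i : ℕ) : ℕ :=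
  {k : Fin s → ℕ | k ≠ 0 ∧ (i : ℝ) ≤ muInfA b a k ∧ muInfA b a k < (i : ℝ) + 1}.ncard

/-! The generating function of `μ_{∞,a}` factorises over digit positions: a digit at position `ℓ`
contributes `1` if it is zero and `x ^ (ℓ + a)` otherwise, so the sum of `x ^ μ_{∞,a}(k)` over all
`k` with at most `N` digits in each coordinate is `∏_j ∏_{ℓ ≤ N} (1 + (b - 1) x ^ (ℓ + a_j))`.
Since `k < b ^ μ_∞(k)`, every `k` counted by `vol_a(i)` lies in such a box with `N = i + 1`, and
contributes at least `x ^ (i + 1)` there (Markov). The logarithmic bound follows from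
`1 + y ≤ exp y`, the geometric series and `x / (1 - x) ≤ -1 / log x`; the choice
`x = exp (-√(s (b - 1) / (i + 1)))` balances its two terms. -/

open Finset Real

lemma sum_range_mul_eq_sum_sum {M : Type*} [AddCommMonoid M] (f : ℕ → M) (m n : ℕ) :
    ∑ k ∈ range (m * n), f k = ∑ i ∈ range m, ∑ j ∈ range n, f (j + n * i) := by
  rw [← Fin.sum_univ_eq_sum_range, ← finProdFinEquiv.sum_comp, Fintype.sum_prod_type,
    ← Fin.sum_univ_eq_sum_range (fun i => ∑ j ∈ range n, f (j + n * i))]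
  exact sum_congr rfl fun i _ => Fin.sum_univ_eq_sum_range (fun j => f (j + n * i)) n

lemma sum_map_filter_range_eq_sum (p : ℕ → Bool) (f : ℕ → ℕ) (n : ℕ) :
    (((List.range n).filter p).map f).sum = ∑ i ∈ range n, if p i then f i else 0 := by
  induction n with
  | zero => simp
  | succ n ih =>
    rw [List.range_succ, List.filter_append, List.map_append, List.sum_append, sum_range_succ, ih]
    by_cases h : p n <;> simp [h]

lemma length_filter_ne_zero_eq_sum (l : List ℕ) :
    (l.filter (· ≠ 0)).length = ∑ i ∈ range l.length, if l.getD i 0 ≠ 0 then 1 else 0 := by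
  induction l with
  | nil => simp
  | cons d l ih =>
    rw [List.length_cons, sum_range_succ', List.filter_cons]
    by_cases h : d = 0 <;> simp_all [add_comm]

lemma digits_add_mul_of_ne_zero {b d m : ℕ} (hb : 1 < b) (hd : d < b) (h : d + b * m ≠ 0) :
    Nat.digits b (d + b * m) = d :: Nat.digits b m :=
  Nat.digits_add b hb d m hd (by by_contra! h'; simp_all)

lemma numNZDigits_add_mul {b d m : ℕ} (hb : 1 < b) (hd : d < b) :
    numNZDigits b (d + b * m) = (if d = 0 then 0 else 1) + numNZDigits b m := by
  rcases eq_or_ne (d + b * m) 0 with h | h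
  · obtain ⟨rfl, rfl⟩ : d = 0 ∧ m = 0 := by simpa [show b ≠ 0 by omega] using h
    simp [numNZDigits]
  · rw [numNZDigits, numNZDigits, digits_add_mul_of_ne_zero hb hd h, List.filter_cons]
    by_cases hd0 : d = 0 <;> simp [hd0, add_comm]

lemma infDickWeight_add_mul {b d m : ℕ} (hb : 1 < b) (hd : d < b) :
    infDickWeight b (d + b * m) =
      (if d = 0 then 0 else 1) + infDickWeight b m + numNZDigits b m := by
  rcases eq_or_ne (d + b * m) 0 with h | h
  · obtain ⟨rfl, rfl⟩ : d = 0 ∧ m = 0 := by simpa [show b ≠ 0 by omega] using h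
    simp [infDickWeight, numNZDigits]
  · simp only [infDickWeight, numNZDigits, sum_map_filter_range_eq_sum,
      length_filter_ne_zero_eq_sum, digits_add_mul_of_ne_zero hb hd h, List.length_cons,
      sum_range_succ', List.getD_cons_succ, List.getD_cons_zero]
    rw [add_comm, add_assoc, ← sum_add_distrib]
    congr 1
    · by_cases hd0 : d = 0 <;> simp [hd0]
    · exact sum_congr rfl fun i _ => by simp only [decide_eq_true_eq]; split_ifs <;> rfl

noncomputable def infDickWeightA (b : ℕ) (a : ℝ) (k : ℕ) : ℝ :=
  infDickWeight b k + a * numNZDigits b k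

lemma muInfA_eq_sum {s : ℕ} (b : ℕ) (a : Fin s → ℝ) (k : Fin s → ℕ) :
    muInfA b a k = ∑ j, infDickWeightA b (a j) (k j) := rfl

/-- Splitting off the lowest digit moves every other digit one position up, which is the same
as raising `a` by one. -/
lemma infDickWeightA_add_mul {b d m : ℕ} (hb : 1 < b) (hd : d < b) (a : ℝ) :
    infDickWeightA b a (d + b * m) =
      (if d = 0 then 0 else 1 + a) + infDickWeightA b (a + 1) m := by
  rw [infDickWeightA, infDickWeightA, infDickWeight_add_mul hb hd, numNZDigits_add_mul hb hd]
  split_ifs <;> push_cast <;> ring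

lemma sum_range_ite_eq_zero_one (b : ℕ) (hb : 0 < b) (y : ℝ) :
    ∑ d ∈ range b, (if d = 0 then 1 else y) = 1 + ((b : ℝ) - 1) * y := by
  obtain ⟨c, rfl⟩ := Nat.exists_eq_add_one_of_ne_zero hb.ne'
  simp [sum_range_succ', add_comm]

lemma sum_range_pow_rpow_infDickWeightA {b : ℕ} (hb : 1 < b) {x : ℝ} (hx : 0 < x) (N : ℕ)
    (a : ℝ) :
    ∑ k ∈ range (b ^ N), x ^ infDickWeightA b a k =
      ∏ ℓ ∈ range N, (1 + ((b : ℝ) - 1) * x ^ (((ℓ : ℝ) + 1) + a)) := by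
  induction N generalizing a with
  | zero => simp [infDickWeightA, infDickWeight, numNZDigits]
  | succ N ih =>
    have hdigit : ∀ m, ∑ d ∈ range b, x ^ infDickWeightA b a (d + b * m) =
        (1 + ((b : ℝ) - 1) * x ^ (1 + a)) * x ^ infDickWeightA b (a + 1) m := by
      intro m
      rw [← sum_range_ite_eq_zero_one b (by omega), sum_mul]
      refine sum_congr rfl fun d hd => ?_
      rw [infDickWeightA_add_mul hb (mem_range.1 hd), rpow_add hx]
      split_ifs <;> simp
    rw [pow_succ, sum_range_mul_eq_sum_sum, sum_congr rfl fun m _ => hdigit m, ← mul_sum, ih,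
      prod_range_succ', mul_comm]
    congr 1
    · exact prod_congr rfl fun ℓ _ => by push_cast; ring_nf
    · simp

lemma numNZDigits_pos {b m : ℕ} (hm : m ≠ 0) : 0 < numNZDigits b m :=
  List.length_pos_of_mem <| List.mem_filter.2
    ⟨List.getLast_mem _, by simpa using Nat.getLast_digit_ne_zero b hm⟩

lemma lt_pow_infDickWeight {b : ℕ} (hb : 1 < b) (k : ℕ) : k < b ^ infDickWeight b k := by
  induction k using Nat.strong_induction_on with
  | _ k ih =>
    rcases eq_or_ne k 0 with rfl | hk
    · exact pow_pos (by omega) _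
    have hm : k / b < k := Nat.div_lt_self (by omega) hb
    have hd : k % b < b := Nat.mod_lt _ (by omega)
    rw [← Nat.mod_add_div k b] at hk ⊢
    rw [infDickWeight_add_mul hb hd]
    rcases eq_or_ne (k / b) 0 with hm0 | hm0
    · have hd0 : k % b ≠ 0 := by simpa [hm0] using hk
      simp [hm0, hd0, hd, infDickWeight, numNZDigits]
    · calc k % b + b * (k / b) < b * (k / b + 1) := by rw [mul_add]; omega
        _ ≤ b * b ^ infDickWeight b (k / b) := Nat.mul_le_mul_left _ (ih _ hm)
        _ = b ^ (infDickWeight b (k / b) + 1) := (pow_succ' _ _).symm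
        _ ≤ _ := Nat.pow_le_pow_right (by omega) (by have := numNZDigits_pos (b := b) hm0; omega)

lemma infDickWeightA_nonneg (b : ℕ) {a : ℝ} (ha : 0 ≤ a) (k : ℕ) : 0 ≤ infDickWeightA b a k := by
  unfold infDickWeightA; positivity

lemma sum_piFinset_rpow_muInfA {b s : ℕ} (hb : 1 < b) {x : ℝ} (hx : 0 < x) (a : Fin s → ℝ)
    (N : ℕ) :
    ∑ k ∈ Fintype.piFinset (fun _ => range (b ^ N)), x ^ muInfA b a k =
      ∏ j, ∏ ℓ ∈ range N, (1 + ((b : ℝ) - 1) * x ^ (((ℓ : ℝ) + 1) + a j)) := by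
  simp_rw [muInfA_eq_sum, rpow_sum_of_pos hx]
  rw [← prod_univ_sum (fun _ => range (b ^ N)) fun j m => x ^ infDickWeightA b (a j) m]
  exact prod_congr rfl fun j _ => sum_range_pow_rpow_infDickWeightA hb hx N (a j)

lemma lt_pow_of_muInfA_lt {b s : ℕ} (hb : 1 < b) {a : Fin s → ℝ} (ha : ∀ j, 0 ≤ a j)
    {k : Fin s → ℕ} {n : ℕ} (h : muInfA b a k < n) (j : Fin s) : k j < b ^ n := by
  have hj : (infDickWeight b (k j) : ℝ) ≤ muInfA b a k :=
    calc (infDickWeight b (k j) : ℝ) ≤ infDickWeightA b (a j) (k j) :=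
          le_add_of_nonneg_right (mul_nonneg (ha j) (Nat.cast_nonneg _))
      _ ≤ muInfA b a k :=
          single_le_sum (fun j _ => infDickWeightA_nonneg b (ha j) (k j)) (mem_univ j)
  have : infDickWeight b (k j) < n := by exact_mod_cast hj.trans_lt h
  exact (lt_pow_infDickWeight hb _).trans_le (Nat.pow_le_pow_right (by omega) this.le)

lemma volA_eq_card_filter {b s : ℕ} (hb : 1 < b) {a : Fin s → ℝ} (ha : ∀ j, 0 ≤ a j) (i : ℕ) :
    volA b a i = ((Fintype.piFinset fun _ => range (b ^ (i + 1))).filter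
      fun k => k ≠ 0 ∧ (i : ℝ) ≤ muInfA b a k ∧ muInfA b a k < (i : ℝ) + 1).card := by
  rw [volA, ← Set.ncard_coe_finset]
  congr 1
  ext k
  simp only [Set.mem_ofPred_eq, coe_filter, Fintype.mem_piFinset, mem_range]
  refine ⟨fun hk => ⟨fun j => lt_pow_of_muInfA_lt hb ha ?_ j, hk⟩, fun hk => hk.2⟩
  exact_mod_cast hk.2.2

lemma volA_mul_rpow_le {b s : ℕ} (hb : 1 < b) {a : Fin s → ℝ} (ha : ∀ j, 0 ≤ a j) (i : ℕ)
    {x : ℝ} (hx0 : 0 < x) (hx1 : x ≤ 1) :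
    (volA b a i : ℝ) * x ^ ((i : ℝ) + 1) ≤
      ∏ j, ∏ ℓ ∈ range (i + 1), (1 + ((b : ℝ) - 1) * x ^ (((ℓ : ℝ) + 1) + a j)) := by
  -- Markov: each counted `k` has `μ_{∞,a}(k) < i + 1`, so contributes at least `x ^ (i + 1)`.
  rw [volA_eq_card_filter hb ha, ← sum_piFinset_rpow_muInfA hb hx0, ← nsmul_eq_mul]
  refine (card_nsmul_le_sum _ _ _ fun k hk => ?_).trans
    (sum_le_sum_of_subset_of_nonneg (filter_subset _ _) fun _ _ _ => by positivity)
  exact rpow_le_rpow_of_exponent_ge hx0 hx1 (mem_filter.1 hk).2.2.2.le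

lemma rpow_natCast_add_one_add {x : ℝ} (hx : 0 < x) (ℓ : ℕ) (a : ℝ) :
    x ^ (((ℓ : ℝ) + 1) + a) = x * x ^ a * x ^ ℓ := by
  rw [rpow_add hx, rpow_add hx, rpow_natCast, rpow_one]
  ring

lemma hasSum_mul_rpow_natCast_add_one_add (c : ℝ) {x : ℝ} (hx0 : 0 < x) (hx1 : x < 1) (a : ℝ) :
    HasSum (fun ℓ : ℕ => c * x ^ (((ℓ : ℝ) + 1) + a)) (c * x ^ a * (x / (1 - x))) := by
  have hterm : (fun ℓ : ℕ => c * x ^ (((ℓ : ℝ) + 1) + a)) = fun ℓ => c * (x * x ^ a) * x ^ ℓ :=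
    funext fun ℓ => by rw [rpow_natCast_add_one_add hx0]; ring
  rw [hterm, show c * x ^ a * (x / (1 - x)) = c * (x * x ^ a) * (1 - x)⁻¹ by ring]
  exact (hasSum_geometric_of_lt_one hx0.le hx1).mul_left _

lemma div_one_sub_le_neg_inv_log {x : ℝ} (hx0 : 0 < x) (hx1 : x < 1) :
    x / (1 - x) ≤ -(log x)⁻¹ := by
  have hlog : -log x ≤ (1 - x) / x := by
    have := log_le_sub_one_of_pos (inv_pos.2 hx0)
    rw [log_inv] at this
    rwa [sub_div, div_self hx0.ne', ← one_div, one_div] at *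
  rw [← inv_neg, ← inv_div]
  exact inv_anti₀ (neg_pos.2 (log_neg hx0 hx1)) hlog

lemma prod_range_one_add_le_tprod {c : ℝ} (hc : 0 ≤ c) {x : ℝ} (hx0 : 0 < x) (hx1 : x < 1)
    (a : ℝ) (N : ℕ) :
    ∏ ℓ ∈ range N, (1 + c * x ^ (((ℓ : ℝ) + 1) + a)) ≤
      ∏' ℓ : ℕ, (1 + c * x ^ (((ℓ : ℝ) + 1) + a)) :=
  ((prod_mono_set_of_one_le fun _ => le_add_of_nonneg_right (by positivity)).comp
    range_mono).ge_of_tendsto (Real.multipliable_one_add_of_summable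
      (hasSum_mul_rpow_natCast_add_one_add c hx0 hx1 a).summable).tendsto_prod_tprod_nat N

lemma prod_range_one_add_le_exp {c : ℝ} (hc : 0 ≤ c) {x : ℝ} (hx0 : 0 < x) (hx1 : x < 1)
    (a : ℝ) (N : ℕ) :
    ∏ ℓ ∈ range N, (1 + c * x ^ (((ℓ : ℝ) + 1) + a)) ≤ exp (-(c / log x) * x ^ a) := by
  have hsum := hasSum_mul_rpow_natCast_add_one_add c hx0 hx1 a
  calc ∏ ℓ ∈ range N, (1 + c * x ^ (((ℓ : ℝ) + 1) + a))
      ≤ ∏ ℓ ∈ range N, exp (c * x ^ (((ℓ : ℝ) + 1) + a)) :=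
        prod_le_prod (fun _ _ => by positivity) fun ℓ _ => by
          linarith [add_one_le_exp (c * x ^ (((ℓ : ℝ) + 1) + a))]
    _ = exp (∑ ℓ ∈ range N, c * x ^ (((ℓ : ℝ) + 1) + a)) := (exp_sum _ _).symm
    _ ≤ exp (c * x ^ a * (x / (1 - x))) :=
        exp_le_exp.2 ((hsum.summable.sum_le_tsum _ fun _ _ => by positivity).trans_eq
          hsum.tsum_eq)
    _ ≤ exp (-(c / log x) * x ^ a) := by
        refine exp_le_exp.2 ((mul_le_mul_of_nonneg_left (div_one_sub_le_neg_inv_log hx0 hx1)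
          (by positivity)).trans_eq ?_)
        ring

lemma volA_le_rpow_mul_prod_range {b s : ℕ} (hb : 1 < b) {a : Fin s → ℝ} (ha : ∀ j, 0 ≤ a j)
    (i : ℕ) {x : ℝ} (hx0 : 0 < x) (hx1 : x < 1) :
    (volA b a i : ℝ) ≤ x ^ (-((i : ℝ) + 1)) *
      ∏ j, ∏ ℓ ∈ range (i + 1), (1 + ((b : ℝ) - 1) * x ^ (((ℓ : ℝ) + 1) + a j)) := by
  rw [rpow_neg hx0.le, ← div_eq_inv_mul, le_div_iff₀ (rpow_pos_of_pos hx0 _)]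
  exact volA_mul_rpow_le hb ha i hx0 hx1.le

lemma volA_le_rpow_mul_tprod {b s : ℕ} (hb : 1 < b) {a : Fin s → ℝ} (ha : ∀ j, 0 ≤ a j)
    (i : ℕ) {x : ℝ} (hx0 : 0 < x) (hx1 : x < 1) :
    (volA b a i : ℝ) ≤ x ^ (-((i : ℝ) + 1)) *
      ∏ j, ∏' ℓ : ℕ, (1 + ((b : ℝ) - 1) * x ^ (((ℓ : ℝ) + 1) + a j)) := by
  have hc : (0 : ℝ) ≤ b - 1 := sub_nonneg.2 (by exact_mod_cast hb.le)
  refine (volA_le_rpow_mul_prod_range hb ha i hx0 hx1).trans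
    (mul_le_mul_of_nonneg_left (prod_le_prod (fun j _ => prod_nonneg fun ℓ _ => by positivity)
      fun j _ => prod_range_one_add_le_tprod hc hx0 hx1 (a j) _) (by positivity))

lemma volA_le_exp {b s : ℕ} (hb : 1 < b) {a : Fin s → ℝ} (ha : ∀ j, 0 ≤ a j)
    (i : ℕ) {x : ℝ} (hx0 : 0 < x) (hx1 : x < 1) :
    (volA b a i : ℝ) ≤ exp (-((i : ℝ) + 1) * log x -
      (((b : ℝ) - 1) / log x) * ∑ j, x ^ (a j)) := by
  have hc : (0 : ℝ) ≤ b - 1 := sub_nonneg.2 (by exact_mod_cast hb.le)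
  calc (volA b a i : ℝ)
      ≤ x ^ (-((i : ℝ) + 1)) * ∏ j, exp (-(((b : ℝ) - 1) / log x) * x ^ a j) :=
        (volA_le_rpow_mul_prod_range hb ha i hx0 hx1).trans
          (mul_le_mul_of_nonneg_left (prod_le_prod (fun j _ => prod_nonneg fun ℓ _ => by positivity)
            fun j _ => prod_range_one_add_le_exp hc hx0 hx1 (a j) _) (by positivity))
    _ = _ := by
        rw [sub_eq_add_neg (-((i : ℝ) + 1) * log x), ← neg_mul, mul_sum, exp_add, exp_sum,
          rpow_def_of_pos hx0, mul_comm (log x)]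

lemma log_volA_le {b s : ℕ} (hb : 1 < b) {a : Fin s → ℝ} (ha : ∀ j, 0 ≤ a j)
    (i : ℕ) {x : ℝ} (hx0 : 0 < x) (hx1 : x < 1) :
    log (volA b a i) ≤ -((i : ℝ) + 1) * log x - (((b : ℝ) - 1) / log x) * ∑ j, x ^ (a j) := by
  rcases (Nat.cast_nonneg (volA b a i) : (0 : ℝ) ≤ _).eq_or_lt with h | h
  · rw [← h, log_zero]
    have hlog := log_neg hx0 hx1
    have hc : (0 : ℝ) ≤ b - 1 := sub_nonneg.2 (by exact_mod_cast hb.le)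
    have h1 : 0 ≤ -((i : ℝ) + 1) * log x := mul_nonneg_of_nonpos_of_nonpos (by linarith) hlog.le
    have h2 : (((b : ℝ) - 1) / log x) * ∑ j, x ^ (a j) ≤ 0 :=
      mul_nonpos_of_nonpos_of_nonneg (div_nonpos_of_nonneg_of_nonpos hc hlog.le)
        (sum_nonneg fun j _ => by positivity)
    linarith
  · exact (log_le_iff_le_exp h).2 (volA_le_exp hb ha i hx0 hx1)

lemma mul_div_sqrt_add_div_div_sqrt {A B : ℝ} (hA : 0 < A) (hB : 0 < B) :
    B * (√A / √B) + A / (√A / √B) = 2 * √(A * B) := by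
  have hA' := sqrt_pos.2 hA
  have hB' := sqrt_pos.2 hB
  rw [sqrt_mul hA.le]
  field_simp
  rw [sq_sqrt hA.le, sq_sqrt hB.le]
  ring

lemma volA_le_exp_two_sqrt {b s : ℕ} (hb : 1 < b) (hs : 0 < s) {a : Fin s → ℝ} {a₀ : ℝ}
    (ha₀ : 0 ≤ a₀) (haj : ∀ j, a j = a₀) (i : ℕ) :
    (volA b a i : ℝ) ≤ exp (2 * √((s : ℝ) * ((b : ℝ) - 1) * ((i : ℝ) + 1))) := by
  set A : ℝ := s * ((b : ℝ) - 1)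
  set B : ℝ := (i : ℝ) + 1
  have hc : (0 : ℝ) < b - 1 := sub_pos.2 (by exact_mod_cast hb)
  have hA : 0 < A := mul_pos (by exact_mod_cast hs) hc
  have hB : 0 < B := by positivity
  set t := √A / √B
  have ht : 0 < t := div_pos (sqrt_pos.2 hA) (sqrt_pos.2 hB)
  have hsum : ∑ j, exp (-t) ^ (a j) ≤ s := by
    calc ∑ j, exp (-t) ^ (a j) ≤ ∑ _j : Fin s, (1 : ℝ) := sum_le_sum fun j _ =>
          rpow_le_one (exp_pos _).le (exp_le_one_iff.2 (neg_nonpos.2 ht.le)) (haj j ▸ ha₀)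
      _ = s := by simp
  calc (volA b a i : ℝ)
      ≤ exp (-B * log (exp (-t)) - (((b : ℝ) - 1) / log (exp (-t))) * ∑ j, exp (-t) ^ (a j)) :=
        volA_le_exp hb (fun j => haj j ▸ ha₀) i (exp_pos _) (exp_lt_one_iff.2 (neg_neg_of_pos ht))
    _ ≤ exp (B * t + A / t) := by
        refine exp_le_exp.2 ?_
        rw [log_exp, div_neg]
        have := mul_le_mul_of_nonneg_left hsum (div_nonneg hc.le ht.le)
        calc -B * -t - -(((b : ℝ) - 1) / t) * ∑ j, exp (-t) ^ (a j)
            = B * t + ((b : ℝ) - 1) / t * ∑ j, exp (-t) ^ (a j) := by ring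
          _ ≤ B * t + ((b : ℝ) - 1) / t * s := by linarith
          _ = B * t + A / t := by ring
    _ = exp (2 * √(A * B)) := by rw [mul_div_sqrt_add_div_div_sqrt hA hB]

theorem stmt_17_general (b s : ℕ) (hb : b.Prime) (hs : 0 < s)
    (a : Fin s → ℝ) (ha : ∀ j, 0 ≤ a j) (i : ℕ) :
    (∀ x ∈ Set.Ioo (0 : ℝ) 1,
      (volA b a i : ℝ) ≤ x ^ (-((i : ℝ) + 1)) *
        ∏ j, ∏' ℓ : ℕ, (1 + ((b : ℝ) - 1) * x ^ (((ℓ : ℝ) + 1) + a j))) ∧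
    (∀ x ∈ Set.Ioo (0 : ℝ) 1,
      Real.log (volA b a i) ≤ -((i : ℝ) + 1) * Real.log x -
        (((b : ℝ) - 1) / Real.log x) * ∑ j, x ^ (a j)) ∧
    (∀ a₀ : ℝ, 0 ≤ a₀ → (∀ j, a j = a₀) →
      (volA b a i : ℝ) ≤
        Real.exp (2 * Real.sqrt ((s : ℝ) * ((b : ℝ) - 1) * ((i : ℝ) + 1)))) :=
  ⟨fun _ hx => volA_le_rpow_mul_tprod hb.one_lt ha i hx.1 hx.2,
    fun _ hx => log_volA_le hb.one_lt ha i hx.1 hx.2,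
    fun _ ha₀ haj => volA_le_exp_two_sqrt hb.one_lt hs ha₀ haj i⟩

/-- Counting bounds for `vol_a(i)`: the generating-function bound for any
`x ∈ (0,1)`, the resulting logarithmic bound, and in the unweighted case
(`a_j ≡ a₀ ≥ 0`) the bound `exp(2√(s(b-1)(i+1)))`. -/
theorem stmt_17 (b s : ℕ) (hb : b.Prime) (hs : 0 < s)
    (a : Fin s → ℝ) (ha : ∀ j, 0 ≤ a j) (i : ℕ) (hi : 1 ≤ i) :
    (∀ x ∈ Set.Ioo (0 : ℝ) 1,
      (volA b a i : ℝ) ≤ x ^ (-((i : ℝ) + 1)) *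
        ∏ j, ∏' ℓ : ℕ, (1 + ((b : ℝ) - 1) * x ^ (((ℓ : ℝ) + 1) + a j))) ∧
    (∀ x ∈ Set.Ioo (0 : ℝ) 1,
      Real.log (volA b a i) ≤ -((i : ℝ) + 1) * Real.log x -
        (((b : ℝ) - 1) / Real.log x) * ∑ j, x ^ (a j)) ∧
    (∀ a₀ : ℝ, 0 ≤ a₀ → (∀ j, a j = a₀) →
      (volA b a i : ℝ) ≤
        Real.exp (2 * Real.sqrt ((s : ℝ) * ((b : ℝ) - 1) * ((i : ℝ) + 1)))) :=
  stmt_17_general b s hb hs a ha i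
end
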